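/- (Degeneracy of the one-dimensional tropical non-strict signature) Let z = (z_1, z_2, …) be a sequence of real numbers, 0 ≤ s < t integers, and a_1, …, a_n positive integers. Then min_{s < j_1 ≤ j_2 ≤ ⋯ ≤ j_n ≤ t} (a_1 z_{j_1} + ⋯ + a_n z_{j_n}) = min_{s < j ≤ t} (a_1 + ⋯ + a_n) z_j; that is, the non-strict tropical iterated-sum coefficient of the word [1^{a_1}]⋯[1^{a_n}] equals that of the single letter [1^{a_1+⋯+a_n}]. -/

import Mathlib

/-- The tropical (min-plus) **non-strict** iterated-sums signature coefficient
`⟨ISS^(idem)_{s,t}(z), w⟩ = min_{s < j_1 ≤ ⋯ ≤ j_k ≤ t} (w_1 z_{j_1} + ⋯ + w_k z_{j_k})`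
of a real sequence `z`, for a word `w` with positive integer letters; it takes values
in `ℝ ∪ {+∞}`, is `0` on the empty word, and `+∞` when the index set is empty. -/
noncomputable def tropISS (z : ℕ → ℝ) : ℕ → ℕ → List ℕ → WithTop ℝ
  | _, _, [] => 0
  | s, t, a :: w =>
      (Finset.Ioc s t).inf fun j => (((a : ℝ) * z j : ℝ) : WithTop ℝ) + tropISS z (j - 1) t w

/-! Letters are nonnegative weights, so `a z_j + b z_k ≥ (a + b) min (z_j, z_k)`: any non-strict
chain costs at least as much as the constant chain at its cheapest index, and constant chains
`j_1 = ⋯ = j_n = j` are admissible. Peeling off the first letter turns this into an induction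
on the word. -/

open Finset

theorem mem_Ioc_pred_self_of_mem_Ioc {s t j : ℕ} (hj : j ∈ Ioc s t) : j ∈ Ioc (j - 1) t :=
  mem_Ioc.2 ⟨by grind, (mem_Ioc.1 hj).2⟩

theorem inf_Ioc_add_inf_Ioc_pred (z : ℕ → ℝ) {c d : ℝ} (hc : 0 ≤ c) (hd : 0 ≤ d) (s t : ℕ) :
    ((Ioc s t).inf fun j =>
        ((c * z j : ℝ) : WithTop ℝ) + (Ioc (j - 1) t).inf fun k => ((d * z k : ℝ) : WithTop ℝ)) =
      (Ioc s t).inf fun j => (((c + d) * z j : ℝ) : WithTop ℝ) := by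
  apply le_antisymm
  · refine Finset.le_inf fun j hj => (inf_le hj).trans ?_
    calc _ ≤ ((c * z j : ℝ) : WithTop ℝ) + ((d * z j : ℝ) : WithTop ℝ) := by
          gcongr; exact inf_le (mem_Ioc_pred_self_of_mem_Ioc hj)
      _ = _ := by rw [← WithTop.coe_add, add_mul]
  · refine Finset.le_inf fun j hj => ?_
    obtain ⟨k, hk, hk_eq⟩ := exists_mem_eq_inf (Ioc (j - 1) t)
      ⟨j, mem_Ioc_pred_self_of_mem_Ioc hj⟩ fun k => ((d * z k : ℝ) : WithTop ℝ)
    have hks : k ∈ Ioc s t := by grind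
    rw [hk_eq, ← WithTop.coe_add]
    rcases le_total (z j) (z k) with h | h
    · exact (inf_le hj).trans (WithTop.coe_le_coe.2 (by nlinarith))
    · exact (inf_le hks).trans (WithTop.coe_le_coe.2 (by nlinarith))

theorem trop_issi_degenerate_general (z : ℕ → ℝ) (s t : ℕ) (hst : s < t)
    (w : List ℕ) :
    tropISS z s t w =
      (Finset.Ioc s t).inf fun j => (((w.sum : ℝ) * z j : ℝ) : WithTop ℝ) := by
  induction w generalizing s with
  | nil => simp [tropISS, inf_const (⟨t, mem_Ioc.2 ⟨hst, le_rfl⟩⟩ : (Ioc s t).Nonempty)]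
  | cons a w ih =>
    have hsuffix : ∀ j ∈ Ioc s t, tropISS z (j - 1) t w =
        (Ioc (j - 1) t).inf fun k => (((w.sum : ℝ) * z k : ℝ) : WithTop ℝ) :=
      fun j hj => ih (j - 1) (by grind)
    rw [tropISS, inf_congr rfl fun j hj => congrArg _ (hsuffix j hj),
      inf_Ioc_add_inf_Ioc_pred z a.cast_nonneg w.sum.cast_nonneg, List.sum_cons, Nat.cast_add]

/-- **Degeneracy of the one-dimensional tropical non-strict signature.** For a real
sequence `z`, integers `0 ≤ s < t`, and positive integer letters `a_1, …, a_n` forming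
the word `w = [1^{a_1}]⋯[1^{a_n}]`:
`min_{s < j_1 ≤ ⋯ ≤ j_n ≤ t} (a_1 z_{j_1} + ⋯ + a_n z_{j_n})
  = min_{s < j ≤ t} (a_1 + ⋯ + a_n) z_j`;
i.e. the non-strict coefficient of `w` equals that of the single letter
`[1^{a_1 + ⋯ + a_n}]`. -/
theorem trop_issi_degenerate (z : ℕ → ℝ) (s t : ℕ) (hst : s < t)
    (w : List ℕ) (hw : ∀ a ∈ w, 0 < a) :
    tropISS z s t w =
      (Finset.Ioc s t).inf fun j => (((w.sum : ℝ) * z j : ℝ) : WithTop ℝ) :=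
  trop_issi_degenerate_general z s t hst w
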